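/- arXiv:0808.2584 — 2 statements merged into one kernel-verified Lean document; each statement's English description precedes it below -/
import Mathlib

section
/- Let k, l, d, w, e be natural numbers with k > 2, l ≥ 2, e > 1, d > 0, and l ≥ 2k − 4, and let ems = (2^k · l)/2 = 2^(k−1)·l. If d ≤ 2^l − w − 1 and e ≤ 2^(k−2), then ((d + w)·e² + 2)^e < 2^ems. -/
/-! Put `N = 2 ^ l`. Then `d + w < N` and `e ^ 2 ≤ 2 ^ (2k - 4) ≤ N`, so the base is below
`(N - 1) N + 2 < N ^ 2`, and its `e`-th power is below `2 ^ (2 e l) ≤ 2 ^ (2 ^ (k - 1) l)`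
because `2 e ≤ 2 ^ (k - 1)`. -/

lemma Nat.mul_add_two_lt_sq {a b N : ℕ} (hN : 2 < N) (ha : a < N) (hb : b ≤ N) :
    a * b + 2 < N ^ 2 := by
  have hab : a * b ≤ (N - 1) * N := Nat.mul_le_mul (by omega) hb
  obtain ⟨t, rfl⟩ : ∃ t, N = t + 1 := ⟨N - 1, by omega⟩
  rw [Nat.add_sub_cancel] at hab
  nlinarith

lemma Nat.sq_le_two_pow_of_le_two_pow {e m l : ℕ} (he : e ≤ 2 ^ m) (hml : 2 * m ≤ l) :
    e ^ 2 ≤ 2 ^ l :=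
  calc e ^ 2 ≤ (2 ^ m) ^ 2 := Nat.pow_le_pow_left he 2
    _ = 2 ^ (2 * m) := by rw [← pow_mul, mul_comm]
    _ ≤ 2 ^ l := Nat.pow_le_pow_right two_pos hml

lemma Nat.two_mul_le_two_pow_pred {e k : ℕ} (he : 1 < e) (hek : e ≤ 2 ^ (k - 2)) :
    2 * e ≤ 2 ^ (k - 1) := by
  have hk : 2 ≤ k := by
    by_contra hk
    rw [Nat.sub_eq_zero_of_le (by omega), pow_zero] at hek
    omega
  have hpow : 2 ^ (k - 1) = 2 * 2 ^ (k - 2) := by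
    rw [← pow_succ']
    congr 1
    omega
  omega

theorem stmt_4_general (k l d w e : ℕ) (he : e > 1) (hd : d > 0)
    (hlk : l ≥ 2 * k - 4) (hdw : d ≤ 2 ^ l - w - 1) (hek : e ≤ 2 ^ (k - 2)) :
    ((d + w) * e ^ 2 + 2) ^ e < 2 ^ (2 ^ (k - 1) * l) := by
  have he2 : e ^ 2 ≤ 2 ^ l := Nat.sq_le_two_pow_of_le_two_pow hek (by omega)
  have hN : 2 < 2 ^ l := by nlinarith
  have hbase : (d + w) * e ^ 2 + 2 < (2 ^ l) ^ 2 := Nat.mul_add_two_lt_sq hN (by omega) he2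
  calc ((d + w) * e ^ 2 + 2) ^ e < ((2 ^ l) ^ 2) ^ e := Nat.pow_lt_pow_left hbase (by omega)
    _ = 2 ^ (2 * e * l) := by rw [← pow_mul, ← pow_mul]; ring_nf
    _ ≤ 2 ^ (2 ^ (k - 1) * l) :=
      Nat.pow_le_pow_right two_pos (Nat.mul_le_mul_right l (Nat.two_mul_le_two_pow_pred he hek))

theorem stmt_4 (k l d w e : ℕ) (hk : k > 2) (hl : l ≥ 2) (he : e > 1) (hd : d > 0)
    (hlk : l ≥ 2 * k - 4) (hdw : d ≤ 2 ^ l - w - 1) (hek : e ≤ 2 ^ (k - 2)) :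
    ((d + w) * e ^ 2 + 2) ^ e < 2 ^ (2 ^ (k - 1) * l) :=
  stmt_4_general k l d w e he hd hlk hdw hek
end

section
/- Let k > 2, l > 1, m, d > 0, e > 1, w be natural numbers with l ≥ 2k − 4, and set ems = 2^(k−1)·l. If m + ims ≤ ems/2, d ≤ 2^l − w − 1, and e ≤ 2^(k−2), then ((2^(ems/2))^(2^(ems/2)))^d · ((d+w)·e² + 2)^e < (2^ems)^(2^ems). -/
/-!
Writing `a = 2^(k-2)·l`, so that `ems = 2a`, both sides are powers of two up to the thread
factor. Since `d + w < 2^l` and `e² ≤ 2^(2k-4) ≤ 2^l`, the thread factor is at most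
`(2^(2l))^e ≤ 2^(2a)`, while `d ≤ 2^l ≤ 2^a`; the claim then reduces to the exponent
inequality `a·2^a·2^a + 2a < 2a·2^(2a)`.
-/

lemma mul_add_two_le_mul_self {n f N : ℕ} (hn₀ : 0 < n) (hn : n < N) (hf : f ≤ N) :
    n * f + 2 ≤ N * N := by
  nlinarith [Nat.mul_le_mul_left n hf, Nat.mul_le_mul_right N (Nat.succ_le_of_lt hn)]

lemma pow_pow_pow_mul_lt_pow_pow {a d Y : ℕ} (ha : 0 < a) (hd : d ≤ 2 ^ a)
    (hY : Y ≤ 2 ^ (2 * a)) :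
    ((2 ^ a) ^ 2 ^ a) ^ d * Y < (2 ^ (2 * a)) ^ 2 ^ (2 * a) := by
  have hsq : 2 ^ a * 2 ^ a = 2 ^ (2 * a) := by rw [← pow_add, two_mul]
  have hfour : 4 ≤ 2 ^ (2 * a) :=
    calc 4 = 2 ^ 2 := rfl
      _ ≤ 2 ^ (2 * a) := Nat.pow_le_pow_right two_pos (by omega)
  have hexp : a * 2 ^ a * d + 2 * a < 2 * a * 2 ^ (2 * a) := by
    nlinarith [Nat.mul_le_mul_left (a * 2 ^ a) hd, hsq]
  calc ((2 ^ a) ^ 2 ^ a) ^ d * Y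
      ≤ 2 ^ (a * 2 ^ a * d) * 2 ^ (2 * a) := by
        rw [← pow_mul, ← pow_mul, mul_assoc]; exact Nat.mul_le_mul_left _ hY
    _ = 2 ^ (a * 2 ^ a * d + 2 * a) := (pow_add ..).symm
    _ < 2 ^ (2 * a * 2 ^ (2 * a)) := Nat.pow_lt_pow_right one_lt_two hexp
    _ = (2 ^ (2 * a)) ^ 2 ^ (2 * a) := pow_mul ..

theorem stmt_19_general (k l d e w : ℕ) (hk : k > 2)
    (hd : d > 0) (hlk : l ≥ 2 * k - 4)
    (hdw : d ≤ 2 ^ l - w - 1)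
    (hek : e ≤ 2 ^ (k - 2)) :
    ((2 ^ ((2 ^ (k - 1) * l) / 2)) ^ (2 ^ ((2 ^ (k - 1) * l) / 2))) ^ d
        * ((d + w) * e ^ 2 + 2) ^ e
      < (2 ^ (2 ^ (k - 1) * l)) ^ (2 ^ (2 ^ (k - 1) * l)) := by
  obtain ⟨j, rfl⟩ : ∃ j, k = j + 2 := ⟨k - 2, by omega⟩
  have hems : 2 ^ (j + 2 - 1) * l = 2 * (2 ^ j * l) := by
    rw [show j + 2 - 1 = j + 1 from rfl, pow_succ]; ring
  simp only [hems, Nat.mul_div_cancel_left _ two_pos, Nat.add_sub_cancel] at hek ⊢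
  have hdwl : d + w < 2 ^ l := by omega
  have hl : 0 < l := Nat.pos_of_ne_zero fun h => by simp [h] at hdwl; omega
  have hle : l ≤ 2 ^ j * l := Nat.le_mul_of_pos_left l (Nat.two_pow_pos j)
  have he2 : e ^ 2 ≤ 2 ^ l :=
    calc e ^ 2 ≤ (2 ^ j) ^ 2 := Nat.pow_le_pow_left hek 2
      _ = 2 ^ (2 * j) := by rw [← pow_mul, mul_comm]
      _ ≤ 2 ^ l := Nat.pow_le_pow_right two_pos (by omega)
  have hthreads : ((d + w) * e ^ 2 + 2) ^ e ≤ 2 ^ (2 * (2 ^ j * l)) :=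
    calc ((d + w) * e ^ 2 + 2) ^ e ≤ (2 ^ l * 2 ^ l) ^ e :=
          Nat.pow_le_pow_left (mul_add_two_le_mul_self (by omega) hdwl he2) e
      _ = 2 ^ (2 * (l * e)) := by rw [← pow_add, ← two_mul, ← pow_mul, mul_assoc]
      _ ≤ 2 ^ (2 * (2 ^ j * l)) := Nat.pow_le_pow_right two_pos
          (by rw [mul_comm (2 ^ j)]; exact Nat.mul_le_mul_left 2 (Nat.mul_le_mul_left l hek))
  exact pow_pow_pow_mul_lt_pow_pow (by positivity)
    ((by omega : d ≤ 2 ^ l).trans (Nat.pow_le_pow_right two_pos hle)) hthreads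

theorem stmt_19 (k l m d e w ims : ℕ) (hk : k > 2) (hl : l > 1) (hm : m > 0)
    (hd : d > 0) (he : e > 1) (hlk : l ≥ 2 * k - 4)
    (hmi : m + ims ≤ (2 ^ (k - 1) * l) / 2) (hdw : d ≤ 2 ^ l - w - 1)
    (hek : e ≤ 2 ^ (k - 2)) :
    ((2 ^ ((2 ^ (k - 1) * l) / 2)) ^ (2 ^ ((2 ^ (k - 1) * l) / 2))) ^ d
        * ((d + w) * e ^ 2 + 2) ^ e
      < (2 ^ (2 ^ (k - 1) * l)) ^ (2 ^ (2 ^ (k - 1) * l)) :=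
  stmt_19_general k l d e w hk hd hlk hdw hek
end
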